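/- arXiv:1606.00183 — 5 statements merged into one kernel-verified Lean document; each statement's English description precedes it below -/
import Mathlib

section
/- Let k be an algebraically closed field of characteristic 0, and for λ ∈ k set g_λ = x⁴ + y⁴ + λx²y² ∈ k[x,y]. For λ, λ′ ∈ k with λ, λ′ ∉ {2, −2}, the forms g_λ and g_{λ′} are GL₂(k)-equivalent if and only if λ′ = λ, or λ′ = −λ, or (2+λ)(2+λ′) = 16, or (2−λ)(2−λ′) = 16, or (2+λ)(2−λ′) = 16, or (2−λ)(2+λ′) = 16. -/
open MvPolynomial

/-- `GL₂(k)`-equivalence of polynomials in `k[x,y]`: `f ∼ g` iff `g = σ(f)` for some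
`σ = ((α,β),(γ,δ)) ∈ GL₂(k)` acting by `x ↦ αx + βy`, `y ↦ γx + δy`. -/
def glEquiv (k : Type*) [CommRing k] (f g : MvPolynomial (Fin 2) k) : Prop :=
  ∃ α β γ δ : k, α * δ - β * γ ≠ 0 ∧
    (MvPolynomial.aeval
      ![C α * X 0 + C β * X 1, C γ * X 0 + C δ * X 1] : _ →ₐ[k] _) f = g

/-- `g_λ = x⁴ + y⁴ + λx²y²`. -/
noncomputable def gForm (k : Type*) [CommRing k] (l : k) : MvPolynomial (Fin 2) k :=
  X 0 ^ 4 + X 1 ^ 4 + C l * X 0 ^ 2 * X 1 ^ 2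

lemma glEquiv_trans {k : Type*} [CommRing k] [NoZeroDivisors k]
    {f g h : MvPolynomial (Fin 2) k}
    (h1 : glEquiv k f g) (h2 : glEquiv k g h) : glEquiv k f h := by
  obtain ⟨a, b, c, d, hd1, he1⟩ := h1
  obtain ⟨a', b', c', d', hd2, he2⟩ := h2
  refine ⟨a * a' + b * c', a * b' + b * d', c * a' + d * c', c * b' + d * d', ?_, ?_⟩
  · have : (a * a' + b * c') * (c * b' + d * d') - (a * b' + b * d') * (c * a' + d * c')
        = (a * d - b * c) * (a' * d' - b' * c') := by ring
    rw [this]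
    exact mul_ne_zero hd1 hd2
  · have hv : (![C (a * a' + b * c') * X 0 + C (a * b' + b * d') * X 1,
        C (c * a' + d * c') * X 0 + C (c * b' + d * d') * X 1] :
          Fin 2 → MvPolynomial (Fin 2) k)
        = fun i => (aeval ![C a' * X 0 + C b' * X 1, C c' * X 0 + C d' * X 1] : _ →ₐ[k] _)
            ((![C a * X 0 + C b * X 1, C c * X 0 + C d * X 1] : Fin 2 → _) i) := by
      funext i
      fin_cases i <;>
        simp [algebraMap_eq] <;>
        ring
    rw [← he2, ← he1, comp_aeval_apply, hv]

lemma glEquiv_neg (k : Type*) [Field k] [IsAlgClosed k] [CharZero k] (l : k) :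
    glEquiv k (gForm k l) (gForm k (-l)) := by
  obtain ⟨i, hi⟩ := IsAlgClosed.exists_pow_nat_eq (-1 : k) (n := 2) (by norm_num)
  have hine : i ≠ 0 := by
    intro h0
    rw [h0] at hi
    norm_num at hi
  refine ⟨1, 0, 0, i, by simpa using hine, ?_⟩
  have hCi : (C i : MvPolynomial (Fin 2) k) ^ 2 = -1 := by
    rw [← map_pow, hi, map_neg, map_one]
  simp only [gForm, map_add, map_mul, map_pow, aeval_X, aeval_C, algebraMap_eq,
    Matrix.cons_val_zero, Matrix.cons_val_one, Matrix.head_cons, map_neg, map_one,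
    map_zero, zero_mul, add_zero, zero_add, one_mul]
  linear_combination (((C i : MvPolynomial (Fin 2) k) ^ 2 - 1) * X 1 ^ 4
    + C l * X 0 ^ 2 * X 1 ^ 2) * hCi

lemma glEquiv_16 (k : Type*) [Field k] [IsAlgClosed k] [CharZero k] (l l' : k)
    (h16 : (2 + l) * (2 + l') = 16) :
    glEquiv k (gForm k l) (gForm k l') := by
  have h2l : (2 + l) ≠ 0 := by
    intro h0; rw [h0, zero_mul] at h16; norm_num at h16
  obtain ⟨t, ht⟩ := IsAlgClosed.exists_pow_nat_eq ((2 + l)⁻¹ : k) (n := 4) (by norm_num)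
  have ht4 : t ^ 4 * (2 + l) = 1 := by rw [ht]; field_simp
  have htne : t ≠ 0 := by
    intro h0; rw [h0] at ht4; simp at ht4
  refine ⟨t, t, t, -t, ?_, ?_⟩
  · have : t * (-t) - t * t = -(2 * t ^ 2) := by ring
    rw [this, neg_ne_zero]
    exact mul_ne_zero two_ne_zero (pow_ne_zero 2 htne)
  · have hCt : (C t : MvPolynomial (Fin 2) k) ^ 4 * (2 + C l) = 1 := by
      have := congrArg (C : k → MvPolynomial (Fin 2) k) ht4
      rw [map_mul, map_pow, map_add, map_one, map_ofNat] at this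
      exact this
    have hll' : (2 + C l) * (C l' : MvPolynomial (Fin 2) k) = 12 - 2 * C l := by
      have hs : (2 + l) * l' = 12 - 2 * l := by linear_combination h16
      have := congrArg (C : k → MvPolynomial (Fin 2) k) hs
      rw [map_mul, map_add, map_sub, map_mul, map_ofNat, map_ofNat] at this
      exact this
    simp only [gForm, map_add, map_mul, map_pow, aeval_X, aeval_C, algebraMap_eq,
      Matrix.cons_val_zero, Matrix.cons_val_one, Matrix.head_cons, map_neg]
    linear_combination (X 0 ^ 4 + X 1 ^ 4 + C l' * X 0 ^ 2 * X 1 ^ 2) * hCt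
      - (C t : MvPolynomial (Fin 2) k) ^ 4 * X 0 ^ 2 * X 1 ^ 2 * hll'

lemma glEquiv_refl (k : Type*) [Field k] (f : MvPolynomial (Fin 2) k) :
    glEquiv k f f := by
  refine ⟨1, 0, 0, 1, by norm_num, ?_⟩
  have : (![C 1 * X 0 + C 0 * X 1, C 0 * X 0 + C 1 * X 1] : Fin 2 → MvPolynomial (Fin 2) k)
      = X := by
    funext i
    fin_cases i <;> simp
  rw [this, aeval_X_left_apply]

/-- for `λ, λ′ ∉ {2, −2}`, `g_λ ∼ g_{λ′}` iff `λ′ = ±λ` or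
`(2±λ)(2±λ′) = 16` (all four sign choices). -/
theorem statement8 (k : Type*) [Field k] [IsAlgClosed k] [CharZero k]
    (l l' : k) (hl : l ≠ 2 ∧ l ≠ -2) (hl' : l' ≠ 2 ∧ l' ≠ -2) :
    glEquiv k (gForm k l) (gForm k l') ↔
      (l' = l ∨ l' = -l ∨ (2 + l) * (2 + l') = 16 ∨ (2 - l) * (2 - l') = 16 ∨
        (2 + l) * (2 - l') = 16 ∨ (2 - l) * (2 + l') = 16) := by
  constructor
  · -- forward direction via invariants
    rintro ⟨α, β, γ, δ, hd, heq⟩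
    have key : ∀ u v : k, (α*u+β*v)^4 + (γ*u+δ*v)^4 + l*((α*u+β*v)^2*(γ*u+δ*v)^2)
        = u^4 + v^4 + l'*(u^2*v^2) := by
      intro u v
      apply_fun (MvPolynomial.eval ![u, v]) at heq
      simpa [gForm, mul_assoc] using heq
    have h10 := key 1 0
    have h01 := key 0 1
    have h11 := key 1 1
    have h1m := key 1 (-1)
    have h21 := key 2 1
    have h12 := key 1 2
    -- coefficient equations
    have ha0 : α^4 + γ^4 + l*(α^2*γ^2) = 1 := by linear_combination h10
    have ha4 : β^4 + δ^4 + l*(β^2*δ^2) = 1 := by linear_combination h01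
    have ha1 : 4*α^3*β + 4*γ^3*δ + 2*l*(α^2*γ*δ + α*β*γ^2) = 0 := by
      linear_combination (1/4)*h11 - (1/4)*h1m + (1/12)*h21 - (1/12)*h12
        - (5/4)*h10 + (5/4)*h01
    have ha3 : 4*α*β^3 + 4*γ*δ^3 + 2*l*(α*β*δ^2 + β^2*γ*δ) = 0 := by
      linear_combination (1/4)*h11 - (1/4)*h1m - (1/12)*h21 + (1/12)*h12
        + (5/4)*h10 - (5/4)*h01
    have ha2 : 6*α^2*β^2 + 6*γ^2*δ^2 + l*(α^2*δ^2 + 4*α*β*γ*δ + β^2*γ^2) = l' := by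
      linear_combination h11 - h10 - h01 - ha1 - ha3
    set d : k := α * δ - β * γ with hdd
    -- invariant identities
    have G1 : 12 + l'^2 = d^4 * (12 + l^2) := by
      linear_combination (-12*(β^4 + δ^4 + l*(β^2*δ^2)))*ha0 - 12*ha4
        + (3*(4*α*β^3 + 4*γ*δ^3 + 2*l*(α*β*δ^2 + β^2*γ*δ)))*ha1
        - ((6*α^2*β^2 + 6*γ^2*δ^2 + l*(α^2*δ^2 + 4*α*β*γ*δ + β^2*γ^2)) + l')*ha2
    have G2 : 72*l' - 2*l'^3 = d^6 * (72*l - 2*l^3) := by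
      set A0 := α^4 + γ^4 + l*(α^2*γ^2) with hA0
      set A1 := 4*α^3*β + 4*γ^3*δ + 2*l*(α^2*γ*δ + α*β*γ^2) with hA1
      set A2 := 6*α^2*β^2 + 6*γ^2*δ^2 + l*(α^2*δ^2 + 4*α*β*γ*δ + β^2*γ^2) with hA2
      set A3 := 4*α*β^3 + 4*γ*δ^3 + 2*l*(α*β*δ^2 + β^2*γ*δ) with hA3
      set A4 := β^4 + δ^4 + l*(β^2*δ^2) with hA4
      have key2 : 72*A0*A2*A4 - 27*A0*A3^2 - 27*A1^2*A4 + 9*A1*A2*A3 - 2*A2^3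
          = d^6 * (72*l - 2*l^3) := by
        rw [hA0, hA1, hA2, hA3, hA4, hdd]; ring
      linear_combination key2 - (72*A2*A4)*ha0 - (72*l')*ha4
        + (-72*A4 + 2*(A2^2 + A2*l' + l'^2))*ha2
        + (27*A0*A3)*ha3 + (27*A1*A4 - 9*A2*A3)*ha1
    -- eliminate d
    have hF : (12 + l'^2)^3 * (72*l - 2*l^3)^2 = (12 + l^2)^3 * (72*l' - 2*l'^3)^2 := by
      linear_combination (((12+l'^2)^2 + (12+l'^2)*(d^4*(12+l^2)) + d^8*(12+l^2)^2)
          * (72*l - 2*l^3)^2) * G1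
        - (((72*l' - 2*l'^3) + d^6*(72*l - 2*l^3)) * (12+l^2)^3) * G2
    have hprod : (l' - l) * (l' + l) * ((2+l)*(2+l') - 16) * ((2-l)*(2-l') - 16)
        * ((2+l)*(2-l') - 16) * ((2-l)*(2+l') - 16) = 0 := by
      linear_combination (-1/432 : k) * hF
    rcases mul_eq_zero.mp hprod with h | h
    · rcases mul_eq_zero.mp h with h | h
      · rcases mul_eq_zero.mp h with h | h
        · rcases mul_eq_zero.mp h with h | h
          · rcases mul_eq_zero.mp h with h | h
            · exact Or.inl (by linear_combination h)
            · exact Or.inr (Or.inl (by linear_combination h))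
          · exact Or.inr (Or.inr (Or.inl (by linear_combination h)))
        · exact Or.inr (Or.inr (Or.inr (Or.inl (by linear_combination h))))
      · exact Or.inr (Or.inr (Or.inr (Or.inr (Or.inl (by linear_combination h)))))
    · exact Or.inr (Or.inr (Or.inr (Or.inr (Or.inr (by linear_combination h)))))
  · -- reverse direction
    rintro (h | h | h | h | h | h)
    · rw [h]; exact glEquiv_refl k _
    · rw [h]; exact glEquiv_neg k l
    · exact glEquiv_16 k l l' h
    · -- (2-l)(2-l') = 16 : g_l ~ g_{-l} ~ g_{-l'} = g_{l'}... use neg twice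
      refine glEquiv_trans (glEquiv_neg k l) (glEquiv_trans (glEquiv_16 k (-l) (-l') ?_) ?_)
      · linear_combination h
      · have := glEquiv_neg k (-l')
        rwa [neg_neg] at this
    · -- (2+l)(2-l') = 16 : g_l ~ g_{-l'} ~ g_{l'}
      refine glEquiv_trans (glEquiv_16 k l (-l') ?_) ?_
      · linear_combination h
      · have := glEquiv_neg k (-l')
        rwa [neg_neg] at this
    · -- (2-l)(2+l') = 16 : g_l ~ g_{-l} ~ g_{l'}
      refine glEquiv_trans (glEquiv_neg k l) (glEquiv_16 k (-l) l' ?_)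
      linear_combination h
end

section
/- Let k be a field of characteristic 0 and V a 2-dimensional k-vector space. Let w ∈ V^{⊗4} satisfy φ(w) = w, where φ is the 4-cycle acting by φ(v₁⊗v₂⊗v₃⊗v₄) = v₄⊗v₁⊗v₂⊗v₃. Then w ∈ Sym⁴V if and only if the component of w in (Alt²V)⊗(Alt²V) under the direct sum decomposition V^{⊗4} = (Sym²V ⊗ Sym²V) ⊕ (Sym²V ⊗ Alt²V) ⊕ (Alt²V ⊗ Sym²V) ⊕ (Alt²V ⊗ Alt²V) vanishes; equivalently, if and only if w ∈ (Sym²V ⊗ V ⊗ V) + (V ⊗ V ⊗ Sym²V) as subspaces of V^{⊗4}. -/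
open scoped TensorProduct

/-- The action of a permutation `θ ∈ 𝔖_m` on `V^{⊗m}`. -/
noncomputable def permAction (k V : Type*) [CommRing k] [AddCommGroup V] [Module k V]
    {m : ℕ} (θ : Equiv.Perm (Fin m)) :
    (⨂[k] (_ : Fin m), V) ≃ₗ[k] (⨂[k] (_ : Fin m), V) :=
  PiTensorProduct.reindex k (fun _ : Fin m => V) θ.symm

/-- The 4-cycle `φ ∈ 𝔖₄` with `φ(v₁⊗v₂⊗v₃⊗v₄) = v₄⊗v₁⊗v₂⊗v₃`. -/
def cyclePerm4 : Equiv.Perm (Fin 4) := (finRotate 4)⁻¹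

/-!
Fix a basis of `V`. A tensor `w ∈ V^{⊗4}` is fixed by `θ ∈ 𝔖₄` iff its coefficient function `c` on
binary words `f : Fin 4 → Fin 2` satisfies `c (f ∘ θ) = c f`. If `w = u + v` with `u` fixed by
`s = (0 1)` and `v` fixed by `t = (2 3)`, then `(1 - s)(1 - t) w = 0`, i.e.
`c f + c (f ∘ s ∘ t) = c (f ∘ s) + c (f ∘ t)`. Combined with invariance under the 4-cycle, this
relation links the two rotation orbits of words with two ones (`2 c(1010) = 2 c(1100)`), which makes
`c` invariant under `s`; since the 4-cycle and `s` generate `𝔖₄`, `w` is symmetric.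
-/

open Equiv

section PrecompStabilizer

variable {α β γ : Type*}

def precompStabilizer (c : (α → β) → γ) : Subgroup (Perm α) where
  carrier := {θ | ∀ f, c (f ∘ θ) = c f}
  one_mem' _ := rfl
  mul_mem' {θ σ} hθ hσ f := (hσ (f ∘ θ)).trans (hθ f)
  inv_mem' {θ} hθ f := by
    simpa [Function.comp_assoc] using (hθ (f ∘ ⇑θ⁻¹)).symm

theorem mem_precompStabilizer {c : (α → β) → γ} {θ : Perm α} :
    θ ∈ precompStabilizer c ↔ ∀ f, c (f ∘ θ) = c f :=
  Iff.rfl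

theorem add_comp_add_eq_of_mem_precompStabilizer [AddCommMonoid γ] {c c' : (α → β) → γ}
    {s t : Perm α} (hcomm : Commute s t) (hs : s ∈ precompStabilizer c)
    (ht : t ∈ precompStabilizer c') (f : α → β) :
    (c + c') f + (c + c') (f ∘ s ∘ t) = (c + c') (f ∘ s) + (c + c') (f ∘ t) := by
  have hc_st : c (f ∘ s ∘ t) = c (f ∘ t) := by
    rw [← Perm.coe_mul, hcomm.eq, Perm.coe_mul]; exact hs (f ∘ t)
  have hc'_st : c' (f ∘ s ∘ t) = c' (f ∘ s) := ht (f ∘ s)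
  simp only [Pi.add_apply, hc_st, hc'_st, hs f, ht f]
  abel

end PrecompStabilizer

section Coordinates

variable {k V ι : Type*} [CommRing k] [AddCommGroup V] [Module k V] {m : ℕ}

theorem permAction_tprod (θ : Perm (Fin m)) (v : Fin m → V) :
    permAction k V θ (PiTensorProduct.tprod k v) = PiTensorProduct.tprod k (v ∘ θ) :=
  PiTensorProduct.reindex_tprod _ _

theorem Basis.piTensorProduct_permAction (b : Module.Basis ι k V) (θ : Perm (Fin m))
    (f : Fin m → ι) :
    permAction k V θ (Basis.piTensorProduct (fun _ => b) f) =
      Basis.piTensorProduct (fun _ => b) (f ∘ θ) := by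
  simp only [Basis.piTensorProduct_apply, permAction_tprod]; rfl

theorem Basis.piTensorProduct_repr_permAction (b : Module.Basis ι k V) (θ : Perm (Fin m))
    (w : ⨂[k] (_ : Fin m), V) (f : Fin m → ι) :
    (Basis.piTensorProduct fun _ => b).repr (permAction k V θ w) (f ∘ θ) =
      (Basis.piTensorProduct fun _ => b).repr w f := by
  set B := Basis.piTensorProduct fun _ : Fin m => b
  have hlin : Finsupp.lapply (f ∘ θ) ∘ₗ B.repr.toLinearMap ∘ₗ (permAction k V θ).toLinearMap =
      Finsupp.lapply f ∘ₗ B.repr.toLinearMap := B.ext fun g => by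
    simp only [LinearMap.comp_apply, LinearEquiv.coe_coe, B, Basis.piTensorProduct_permAction,
      Module.Basis.repr_self, Finsupp.lapply_apply]
    exact Finsupp.single_apply_left θ.surjective.injective_comp_right g f 1
  exact LinearMap.congr_fun hlin w

theorem permAction_eq_self_iff (b : Module.Basis ι k V) (θ : Perm (Fin m))
    (w : ⨂[k] (_ : Fin m), V) :
    permAction k V θ w = w ↔
      θ ∈ precompStabilizer ⇑((Basis.piTensorProduct fun _ => b).repr w) := by
  rw [(Basis.piTensorProduct fun _ => b).ext_elem_iff, mem_precompStabilizer]
  constructor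
  · intro h f
    rw [← h (f ∘ θ), Basis.piTensorProduct_repr_permAction]
  · intro h g
    obtain ⟨f, rfl⟩ : ∃ f : Fin m → ι, f ∘ θ = g := ⟨g ∘ θ.symm, by ext; simp⟩
    rw [Basis.piTensorProduct_repr_permAction, h]

end Coordinates

section BinaryWords

variable {A : Type*} [AddCommMonoid A] [IsAddTorsionFree A] {c : (Fin 4 → Fin 2) → A}

theorem swap_mem_precompStabilizer (hrot : finRotate 4 ∈ precompStabilizer c)
    (hst : ∀ f, c f + c (f ∘ swap 0 1 ∘ swap 2 3) = c (f ∘ swap 0 1) + c (f ∘ swap 2 3)) :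
    swap 0 1 ∈ precompStabilizer c := by
  intro f
  have hpow (j : ℕ) (g : Fin 4 → Fin 2) : c (g ∘ ⇑(finRotate 4 ^ j)) = c g := pow_mem hrot j g
  -- `f ∘ swap 0 1` is a rotation of `f` unless `f ∈ {0110, 1001, 0101, 1010}`, where `hst`
  -- applies with both sides collapsing under rotation.
  have hword : ∀ f : Fin 4 → Fin 2,
      (∃ j : Fin 4, f ∘ swap 0 1 = f ∘ ⇑(finRotate 4 ^ (j : ℕ))) ∨
        ∃ j l : Fin 4, f ∘ swap 0 1 ∘ swap 2 3 = f ∘ ⇑(finRotate 4 ^ (j : ℕ)) ∧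
          f ∘ swap 2 3 = f ∘ swap 0 1 ∘ ⇑(finRotate 4 ^ (l : ℕ)) := by
    decide
  obtain ⟨j, hj⟩ | ⟨j, l, hj, hl⟩ := hword f
  · rw [hj, hpow]
  · have h := hst f
    rw [hj, hpow, hl, ← Function.comp_assoc, hpow, ← two_nsmul, ← two_nsmul] at h
    exact (IsAddTorsionFree.nsmul_right_injective two_ne_zero h).symm

theorem precompStabilizer_eq_top (hrot : finRotate 4 ∈ precompStabilizer c)
    (hst : ∀ f, c f + c (f ∘ swap 0 1 ∘ swap 2 3) = c (f ∘ swap 0 1) + c (f ∘ swap 2 3)) :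
    precompStabilizer c = ⊤ := by
  rw [eq_top_iff, ← Perm.closure_cycle_adjacent_swap isCycle_finRotate support_finRotate 0,
    Subgroup.closure_le, Set.insert_subset_iff, Set.singleton_subset_iff]
  exact ⟨hrot, swap_mem_precompStabilizer hrot hst⟩

end BinaryWords

/-- for a 2-dimensional `V` over a field of characteristic 0 and
`w ∈ V^{⊗4}` with `φ(w) = w`, one has `w ∈ Sym⁴V` if and only if
`w ∈ (Sym²V ⊗ V ⊗ V) + (V ⊗ V ⊗ Sym²V)` (equivalently, the component of `w` in
`Alt²V ⊗ Alt²V` vanishes); here `Sym²V ⊗ V ⊗ V` (resp. `V ⊗ V ⊗ Sym²V`) is the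
fixed subspace of the transposition of the first (resp. last) two tensor factors. -/
theorem statement10 (k V : Type*) [Field k] [CharZero k]
    [AddCommGroup V] [Module k V] [FiniteDimensional k V]
    (hdim : Module.finrank k V = 2)
    (w : ⨂[k] (_ : Fin 4), V) (hw : permAction k V cyclePerm4 w = w) :
    (∀ θ : Equiv.Perm (Fin 4), permAction k V θ w = w) ↔
      (∃ u v : ⨂[k] (_ : Fin 4), V,
        permAction k V (Equiv.swap (0 : Fin 4) 1) u = u ∧
        permAction k V (Equiv.swap (2 : Fin 4) 3) v = v ∧
        w = u + v) := by
  constructor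
  · intro h
    exact ⟨w, 0, h _, map_zero _, (add_zero w).symm⟩
  · rintro ⟨u, v, hu, hv, rfl⟩ θ
    set b := Module.finBasisOfFinrankEq k V hdim
    rw [permAction_eq_self_iff b] at hu hv hw ⊢
    have hrot := inv_mem hw
    rw [cyclePerm4, inv_inv] at hrot
    rw [map_add, Finsupp.coe_add] at hrot ⊢
    rw [precompStabilizer_eq_top hrot (add_comp_add_eq_of_mem_precompStabilizer
      (Equiv.ext <| by decide) hu hv)]
    exact Subgroup.mem_top θ
end

section
/- Let k be a field of characteristic 0, let α, β, γ, δ ∈ k with αδ − βγ ≠ 0, and let λ ∈ k. If 6(αx + βy)²(γx + δy)² + (αx + βy)⁴ = λ·(6x²y² + x⁴) holds in k[x,y], then β = 0, γ = 0, and α² = δ². -/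
open MvPolynomial

/-- if `6(αx + βy)²(γx + δy)² + (αx + βy)⁴ = λ·(6x²y² + x⁴)` in
`k[x,y]` with `αδ − βγ ≠ 0`, then `β = 0`, `γ = 0` and `α² = δ²`. -/
theorem statement16 (k : Type*) [Field k] [CharZero k]
    (α β γ δ lam : k) (hdet : α * δ - β * γ ≠ 0)
    (h : 6 * (C α * X 0 + C β * X 1) ^ 2 * (C γ * X 0 + C δ * X 1) ^ 2 +
          (C α * X 0 + C β * X 1) ^ 4 =
        C lam * (6 * (X 0 ^ 2 * X 1 ^ 2) + X 0 ^ 4 : MvPolynomial (Fin 2) k)) :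
    β = 0 ∧ γ = 0 ∧ α ^ 2 = δ ^ 2 := by
  have hv : ∀ a b : k,
      6 * (α * a + β * b) ^ 2 * (γ * a + δ * b) ^ 2 + (α * a + β * b) ^ 4 =
        lam * (6 * (a ^ 2 * b ^ 2) + a ^ 4) := by
    intro a b
    have h2 := congrArg (eval ![a, b]) h
    simpa using h2
  have A0 := hv 1 0
  have A4 := hv 0 1
  have A1 := hv 1 1
  have A2 := hv 1 (-1)
  have A3 := hv 1 2
  have hc04 : 6 * β ^ 2 * δ ^ 2 + β ^ 4 = 0 := by linear_combination A4
  have hc40 : 6 * α ^ 2 * γ ^ 2 + α ^ 4 = lam := by linear_combination A0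
  have hc13 : 12 * α * β * δ ^ 2 + 12 * β ^ 2 * γ * δ + 4 * α * β ^ 3 = 0 := by
    linear_combination (1/6) * A3 + (1/2) * A0 - 2 * A4 - (1/2) * A1 - (1/6) * A2
  have hc31 : 12 * α ^ 2 * γ * δ + 12 * α * β * γ ^ 2 + 4 * α ^ 3 * β = 0 := by
    linear_combination A1 - (1/3) * A2 - (1/6) * A3 - (1/2) * A0 + 2 * A4
  have hc22 : 6 * α ^ 2 * δ ^ 2 + 24 * α * β * γ * δ + 6 * β ^ 2 * γ ^ 2 +
      6 * α ^ 2 * β ^ 2 = 6 * lam := by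
    linear_combination (1/2) * A1 + (1/2) * A2 - A0 - A4
  have hβ : β = 0 := by
    by_contra hβ
    have hb2 : β ^ 2 + 6 * δ ^ 2 = 0 := by
      have : β ^ 2 * (β ^ 2 + 6 * δ ^ 2) = 0 := by linear_combination hc04
      rcases mul_eq_zero.mp this with h' | h'
      · exact absurd (pow_eq_zero_iff two_ne_zero |>.mp h') hβ
      · exact h'
    have hδ : δ = 0 := by
      have h3 : β * (3 * δ * (β * γ - α * δ)) = 0 := by
        linear_combination (1/4) * hc13 - α * β * hb2
      rcases mul_eq_zero.mp h3 with h' | h'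
      · exact absurd h' hβ
      rcases mul_eq_zero.mp h' with h' | h'
      · rcases mul_eq_zero.mp h' with h' | h'
        · norm_num at h'
        · exact h'
      · exact absurd (by linear_combination -h') hdet
    have : β ^ 2 = 0 := by linear_combination hb2 - 6 * δ * hδ
    exact hβ (pow_eq_zero_iff two_ne_zero |>.mp this)
  subst hβ
  have had : α * δ ≠ 0 := by simpa using hdet
  have hα : α ≠ 0 := fun h' => had (by simp [h'])
  have hδ : δ ≠ 0 := fun h' => had (by simp [h'])
  have hγ : γ = 0 := by
    have h3 : α ^ 2 * (γ * δ) = 0 := by linear_combination (1/12) * hc31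
    rcases mul_eq_zero.mp h3 with h' | h'
    · exact absurd (pow_eq_zero_iff two_ne_zero |>.mp h') hα
    rcases mul_eq_zero.mp h' with h' | h'
    · exact h'
    · exact absurd h' hδ
  refine ⟨rfl, hγ, ?_⟩
  have h4 : α ^ 2 * (α ^ 2 - δ ^ 2) = 0 := by
    linear_combination hc40 - (1/6) * hc22 - 6 * α ^ 2 * γ * hγ
  rcases mul_eq_zero.mp h4 with h' | h'
  · exact absurd (pow_eq_zero_iff two_ne_zero |>.mp h') hα
  · linear_combination h'
end

section
/- Let k be an algebraically closed field of characteristic 0 and let a ∈ k satisfy a ≠ 0, a ≠ 1, a ≠ −1, a ≠ 3, a ≠ −3 and a² ≠ −3. Let α, β, γ, δ ∈ k with αδ − βγ ≠ 0 and λ ∈ k, and suppose 6(αx + βy)²(γx + δy)² + a(αx + βy)⁴ + a(γx + δy)⁴ = λ·(6x²y² + ax⁴ + ay⁴) holds in k[x,y]. Then either (β = γ = 0 and α² = δ²) or (α = δ = 0 and β² = γ²). In particular, in either case λ = (αδ − βγ)². -/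
open MvPolynomial

/-- let `a ∉ {0, ±1, ±3}` with `a² ≠ −3`.  If
`6(αx + βy)²(γx + δy)² + a(αx + βy)⁴ + a(γx + δy)⁴ = λ·(6x²y² + ax⁴ + ay⁴)` in
`k[x,y]` with `αδ − βγ ≠ 0`, then either (`β = γ = 0` and `α² = δ²`) or
(`α = δ = 0` and `β² = γ²`); in either case `λ = (αδ − βγ)²`. -/
theorem statement17 (k : Type*) [Field k] [IsAlgClosed k] [CharZero k]
    (a : k) (ha0 : a ≠ 0) (ha1 : a ≠ 1) (ha1' : a ≠ -1) (ha3 : a ≠ 3)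
    (ha3' : a ≠ -3) (ha : a ^ 2 ≠ -3)
    (α β γ δ lam : k) (hdet : α * δ - β * γ ≠ 0)
    (h : 6 * (C α * X 0 + C β * X 1) ^ 2 * (C γ * X 0 + C δ * X 1) ^ 2 +
          C a * (C α * X 0 + C β * X 1) ^ 4 + C a * (C γ * X 0 + C δ * X 1) ^ 4 =
        C lam * (6 * (X 0 ^ 2 * X 1 ^ 2) + C a * X 0 ^ 4 + C a * X 1 ^ 4 :
          MvPolynomial (Fin 2) k)) :
    ((β = 0 ∧ γ = 0 ∧ α ^ 2 = δ ^ 2) ∨ (α = 0 ∧ δ = 0 ∧ β ^ 2 = γ ^ 2)) ∧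
      lam = (α * δ - β * γ) ^ 2 := by
  have h10 := congrArg (eval ![(1:k),0]) h
  have h01 := congrArg (eval ![(0:k),1]) h
  have h11 := congrArg (eval ![(1:k),1]) h
  have h1m1 := congrArg (eval ![(1:k),-1]) h
  have h12 := congrArg (eval ![(1:k),2]) h
  simp only [map_add, map_mul, map_pow, eval_C, eval_X, map_ofNat,
    Matrix.cons_val_zero, Matrix.cons_val_one, Matrix.head_cons] at h10 h01 h11 h1m1 h12
  have e0 : 6*α^2*γ^2 + a*α^4 + a*γ^4 = a*lam := by linear_combination h10
  have e4 : 6*β^2*δ^2 + a*β^4 + a*δ^4 = a*lam := by linear_combination h01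
  have e1 : 3*α*γ*(α*δ+β*γ) + a*(α^3*β+γ^3*δ) = 0 := by
    linear_combination (-1/8 : k)*h10 + (1/2:k)*h01 + (1/4:k)*h11 + (-1/12:k)*h1m1 + (-1/24:k)*h12
  have e3 : 3*β*δ*(α*δ+β*γ) + a*(α*β^3+γ*δ^3) = 0 := by
    linear_combination (1/8 : k)*h10 + (-1/2:k)*h01 + (-1/8:k)*h11 + (-1/24:k)*h1m1 + (1/24:k)*h12
  have e2 : α^2*δ^2 + 4*α*β*γ*δ + β^2*γ^2 + a*(α^2*β^2+γ^2*δ^2) = lam := by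
    linear_combination (-1/6:k)*h10 + (-1/6:k)*h01 + (1/12:k)*h11 + (1/12:k)*h1m1
  clear h h10 h01 h11 h1m1 h12
  -- main claim: α*β = 0 and γ*δ = 0
  have key : α*β = 0 ∧ γ*δ = 0 := by
    by_cases hS : α*δ + β*γ = 0
    · exfalso
      have h2 : (2:k) ≠ 0 := two_ne_zero
      have hαδ : α*δ ≠ 0 := fun hz => hdet (by linear_combination -hS + 2*hz)
      have hβγ : β*γ ≠ 0 := fun hz => hdet (by linear_combination hS - 2*hz)
      have hα : α ≠ 0 := left_ne_zero_of_mul hαδ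
      have hδ : δ ≠ 0 := right_ne_zero_of_mul hαδ
      have hβ : β ≠ 0 := left_ne_zero_of_mul hβγ
      have hγ : γ ≠ 0 := right_ne_zero_of_mul hβγ
      have hα4 : α^4 ≠ 0 := pow_ne_zero 4 hα
      have f1 : α^3*β + γ^3*δ = 0 := by
        have h' : a*(α^3*β + γ^3*δ) = 0 := by linear_combination e1 - 3*α*γ*hS
        exact (mul_eq_zero.mp h').resolve_left ha0
      have f3 : α*β^3 + γ*δ^3 = 0 := by
        have h' : a*(α*β^3 + γ*δ^3) = 0 := by linear_combination e3 - 3*β*δ*hS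
        exact (mul_eq_zero.mp h').resolve_left ha0
      have g1 : α^4 = γ^4 := by
        have h' : β*(α^4 - γ^4) = 0 := by linear_combination α*f1 - γ^3*hS
        exact sub_eq_zero.mp ((mul_eq_zero.mp h').resolve_left hβ)
      have g2 : α^2*β^2 = γ^2*δ^2 := by
        have h' : δ*(α^2*β^2 - γ^2*δ^2) = 0 := by linear_combination α*β^2*hS - γ*f3
        exact sub_eq_zero.mp ((mul_eq_zero.mp h').resolve_left hδ)
      have g3 : α^2*δ^2 = β^2*γ^2 := by linear_combination (α*δ - β*γ)*hS
      have hcase : γ^2 = α^2 ∨ γ^2 = -α^2 := by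
        have h' : (γ^2 - α^2)*(γ^2 + α^2) = 0 := by linear_combination -g1
        rcases mul_eq_zero.mp h' with h'|h'
        · exact Or.inl (by linear_combination h')
        · exact Or.inr (by linear_combination h')
      rcases hcase with hc | hc
      · -- γ² = α²
        have hδβ : δ^2 = β^2 := by
          have h' : α^2*(δ^2 - β^2) = 0 := by linear_combination g3 + β^2*hc
          exact sub_eq_zero.mp ((mul_eq_zero.mp h').resolve_left (pow_ne_zero 2 hα))
        have hl : (6+2*a)*α^4 = a*lam := by
          linear_combination e0 - (6*α^2 + a*(α^2+γ^2))*hc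
        have hl4 : (6+2*a)*β^4 = a*lam := by
          linear_combination e4 - (6*β^2 + a*(β^2+δ^2))*hδβ
        have h6 : (6+2*a) ≠ 0 := fun hz => ha3' (by linear_combination hz/2)
        have hβα : β^4 = α^4 := by
          have h' : (6+2*a)*(β^4-α^4) = 0 := by linear_combination hl4 - hl
          exact sub_eq_zero.mp ((mul_eq_zero.mp h').resolve_left h6)
        have hcase2 : β^2 = α^2 ∨ β^2 = -α^2 := by
          have h' : (β^2 - α^2)*(β^2 + α^2) = 0 := by linear_combination hβα
          rcases mul_eq_zero.mp h' with h'|h'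
          · exact Or.inl (by linear_combination h')
          · exact Or.inr (by linear_combination h')
        rcases hcase2 with hb | hb
        · have p2 : β^2*γ^2 = α^4 := by linear_combination β^2*hc + α^2*hb
          have p1 : α^2*δ^2 = α^4 := by linear_combination g3 + p2
          have p3 : α*β*γ*δ = -α^4 := by linear_combination β*γ*hS - p2
          have p4 : α^2*β^2 = α^4 := by linear_combination α^2*hb
          have p5 : γ^2*δ^2 = α^4 := by linear_combination δ^2*hc + α^2*hδβ + α^2*hb
          have lam2 : (2*a-2)*α^4 = lam := by
            linear_combination e2 - p1 - 4*p3 - p2 - a*p4 - a*p5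
          have hz : (a-3)*(a+1)*(2*α^4) = 0 := by linear_combination a*lam2 - hl
          have hC : (a-3)*(a+1) ≠ 0 :=
            mul_ne_zero (sub_ne_zero.mpr ha3) (fun h' => ha1' (by linear_combination h'))
          exact hα4 (by
            have := (mul_eq_zero.mp hz).resolve_left hC
            exact (mul_eq_zero.mp this).resolve_left h2)
        · have p2 : β^2*γ^2 = -α^4 := by linear_combination β^2*hc + α^2*hb
          have p1 : α^2*δ^2 = -α^4 := by linear_combination g3 + p2
          have p3 : α*β*γ*δ = α^4 := by linear_combination β*γ*hS - p2
          have p4 : α^2*β^2 = -α^4 := by linear_combination α^2*hb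
          have p5 : γ^2*δ^2 = -α^4 := by linear_combination δ^2*hc + g3 + p2
          have lam2 : (2-2*a)*α^4 = lam := by
            linear_combination e2 - p1 - 4*p3 - p2 - a*p4 - a*p5
          have hz : (a^2+3)*(2*α^4) = 0 := by linear_combination hl - a*lam2
          have hC : a^2+3 ≠ 0 := fun h' => ha (by linear_combination h')
          exact hα4 (by
            have := (mul_eq_zero.mp hz).resolve_left hC
            exact (mul_eq_zero.mp this).resolve_left h2)
      · -- γ² = -α²
        have hδβ : δ^2 = -β^2 := by
          have h' : α^2*(δ^2 + β^2) = 0 := by linear_combination g3 + β^2*hc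
          have h'' := (mul_eq_zero.mp h').resolve_left (pow_ne_zero 2 hα)
          linear_combination h''
        have hl : (2*a-6)*α^4 = a*lam := by
          linear_combination e0 + (-6*α^2 - a*(γ^2-α^2))*hc
        have hl4 : (2*a-6)*β^4 = a*lam := by
          linear_combination e4 + (-6*β^2 - a*(δ^2-β^2))*hδβ
        have h6 : (2*a-6) ≠ 0 := fun hz => ha3 (by linear_combination hz/2)
        have hβα : β^4 = α^4 := by
          have h' : (2*a-6)*(β^4-α^4) = 0 := by linear_combination hl4 - hl
          exact sub_eq_zero.mp ((mul_eq_zero.mp h').resolve_left h6)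
        have hcase2 : β^2 = α^2 ∨ β^2 = -α^2 := by
          have h' : (β^2 - α^2)*(β^2 + α^2) = 0 := by linear_combination hβα
          rcases mul_eq_zero.mp h' with h'|h'
          · exact Or.inl (by linear_combination h')
          · exact Or.inr (by linear_combination h')
        rcases hcase2 with hb | hb
        · have p1 : α^2*δ^2 = -α^4 := by linear_combination α^2*hδβ - α^2*hb
          have p2 : β^2*γ^2 = -α^4 := by linear_combination β^2*hc - α^2*hb
          have p3 : α*β*γ*δ = α^4 := by linear_combination β*γ*hS - p2
          have p4 : α^2*β^2 = α^4 := by linear_combination α^2*hb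
          have p5 : γ^2*δ^2 = α^4 := by linear_combination δ^2*hc - p1
          have lam2 : (2+2*a)*α^4 = lam := by
            linear_combination e2 - p1 - 4*p3 - p2 - a*p4 - a*p5
          have hz : (a^2+3)*(2*α^4) = 0 := by linear_combination a*lam2 - hl
          have hC : a^2+3 ≠ 0 := fun h' => ha (by linear_combination h')
          exact hα4 (by
            have := (mul_eq_zero.mp hz).resolve_left hC
            exact (mul_eq_zero.mp this).resolve_left h2)
        · have p1 : α^2*δ^2 = α^4 := by linear_combination α^2*hδβ - α^2*hb
          have p2 : β^2*γ^2 = α^4 := by linear_combination β^2*hc - α^2*hb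
          have p3 : α*β*γ*δ = -α^4 := by linear_combination β*γ*hS - p2
          have p4 : α^2*β^2 = -α^4 := by linear_combination α^2*hb
          have p5 : γ^2*δ^2 = -α^4 := by linear_combination δ^2*hc - p1
          have lam2 : (-2-2*a)*α^4 = lam := by
            linear_combination e2 - p1 - 4*p3 - p2 - a*p4 - a*p5
          have hz : (a+3)*(a-1)*(2*α^4) = 0 := by linear_combination hl - a*lam2
          have hC : (a+3)*(a-1) ≠ 0 :=
            mul_ne_zero (fun h' => ha3' (by linear_combination h')) (sub_ne_zero.mpr ha1)
          exact hα4 (by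
            have := (mul_eq_zero.mp hz).resolve_left hC
            exact (mul_eq_zero.mp this).resolve_left h2)
    · -- S ≠ 0
      have hA : ((α*δ+β*γ)*(α*δ-β*γ))*(a*γ*δ+3*α*β) = 0 := by
        linear_combination α^2*e3 - β^2*e1
      have hA1 : a*γ*δ+3*α*β = 0 :=
        (mul_eq_zero.mp hA).resolve_left (mul_ne_zero hS hdet)
      have hB : ((α*δ+β*γ)*(α*δ-β*γ))*(a*α*β+3*γ*δ) = 0 := by
        linear_combination δ^2*e1 - γ^2*e3
      have hB1 : a*α*β+3*γ*δ = 0 :=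
        (mul_eq_zero.mp hB).resolve_left (mul_ne_zero hS hdet)
      have hab : α*β = 0 := by
        have h' : (a-3)*(a+3)*(α*β) = 0 := by linear_combination a*hB1 - 3*hA1
        have hC : (a-3)*(a+3) ≠ 0 :=
          mul_ne_zero (sub_ne_zero.mpr ha3) (fun h' => ha3' (by linear_combination h'))
        exact (mul_eq_zero.mp h').resolve_left hC
      have hgd : γ*δ = 0 := by
        have h' : a*(γ*δ) = 0 := by linear_combination hA1 - 3*hab
        exact (mul_eq_zero.mp h').resolve_left ha0
      exact ⟨hab, hgd⟩
  obtain ⟨hab, hgd⟩ := key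
  rcases mul_eq_zero.mp hab with ha0' | hb0 <;> rcases mul_eq_zero.mp hgd with hg0 | hd0
  · -- α = 0, γ = 0 : contradicts det
    exact absurd (by rw [ha0', hg0]; ring) hdet
  · -- α = 0, δ = 0 : right disjunct
    have hlm : lam = β^2*γ^2 := by
      linear_combination -e2 + (α*δ^2+4*β*γ*δ+a*α*β^2)*ha0' + (a*γ^2*δ)*hd0
    have hβ4 : a*β^4 = a*lam := by linear_combination e4 - (6*β^2*δ + a*δ^3)*hd0
    have hβ : β ≠ 0 := fun hz => hdet (by linear_combination δ*ha0' - γ*hz)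
    have hbg : β^2 = γ^2 := by
      have h' : (a*β^2)*(β^2-γ^2) = 0 := by linear_combination hβ4 + a*hlm
      exact sub_eq_zero.mp
        ((mul_eq_zero.mp h').resolve_left (mul_ne_zero ha0 (pow_ne_zero 2 hβ)))
    exact ⟨Or.inr ⟨ha0', hd0, hbg⟩, by linear_combination hlm + (2*β*γ*δ - α*δ^2)*ha0'⟩
  · -- β = 0, γ = 0 : left disjunct
    have hlm : lam = α^2*δ^2 := by
      linear_combination -e2 + (4*α*γ*δ + β*γ^2 + a*α^2*β)*hb0 + (a*γ*δ^2)*hg0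
    have hα4 : a*α^4 = a*lam := by linear_combination e0 - (6*α^2*γ + a*γ^3)*hg0
    have hα : α ≠ 0 := fun hz => hdet (by linear_combination δ*hz - γ*hb0)
    have had : α^2 = δ^2 := by
      have h' : (a*α^2)*(α^2-δ^2) = 0 := by linear_combination hα4 + a*hlm
      exact sub_eq_zero.mp
        ((mul_eq_zero.mp h').resolve_left (mul_ne_zero ha0 (pow_ne_zero 2 hα)))
    exact ⟨Or.inl ⟨hb0, hg0, had⟩, by linear_combination hlm + (2*α*γ*δ - β*γ^2)*hb0⟩
  · -- β = 0, δ = 0 : contradicts det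
    exact absurd (by rw [hb0, hd0]; ring) hdet
end

section
/- Let k be an algebraically closed field of characteristic 0 and let a ∈ k satisfy a² = −3. Set f = 6x²y² + ax⁴ + ay⁴ ∈ k[x,y]. Then there exist σ ∈ GL₂(k) and λ ∈ k with σ(f) = λ·f and λ ≠ (det σ)². More precisely, there exist such σ and λ with λ = (det σ)²·ω for a primitive cube root of unity ω. -/
open MvPolynomial

/-- let `a² = −3` and `f = 6x²y² + ax⁴ + ay⁴`.  There exist
`σ = ((α,β),(γ,δ)) ∈ GL₂(k)` and `λ ∈ k` with `σ(f) = λ·f` and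
`λ ≠ (det σ)²`; more precisely `λ = (det σ)²·ω` with `ω` a primitive cube root
of unity. -/
theorem statement18 (k : Type*) [Field k] [IsAlgClosed k] [CharZero k]
    (a : k) (ha : a ^ 2 = -3) :
    ∃ α β γ δ lam ω : k, α * δ - β * γ ≠ 0 ∧
      (MvPolynomial.aeval
          ![C α * X 0 + C β * X 1, C γ * X 0 + C δ * X 1] : _ →ₐ[k] _)
        (6 * (X 0 ^ 2 * X 1 ^ 2) + C a * X 0 ^ 4 + C a * X 1 ^ 4 :
          MvPolynomial (Fin 2) k) =
        C lam * (6 * (X 0 ^ 2 * X 1 ^ 2) + C a * X 0 ^ 4 + C a * X 1 ^ 4) ∧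
      lam ≠ (α * δ - β * γ) ^ 2 ∧
      ω ^ 3 = 1 ∧ ω ≠ 1 ∧ lam = (α * δ - β * γ) ^ 2 * ω := by
  obtain ⟨i, hi⟩ := IsAlgClosed.exists_pow_nat_eq (-1 : k) (n := 2) (by norm_num)
  have hine : i ≠ 0 := by
    intro h; rw [h] at hi; norm_num at hi
  have ha3 : a ≠ 3 := by
    intro h; rw [h] at ha; norm_num at ha
  refine ⟨1, i, 1, -i, 2 - 2 * a, (a - 1) / 2, ?_, ?_, ?_, ?_, ?_, ?_⟩
  · intro h
    have : i = 0 := by linear_combination (-1/2 : k) * h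
    exact hine this
  · have hi' : (C i : MvPolynomial ℕ k) ^ 2 = -1 := by
      rw [← C_pow, hi]; simp
    have ha' : (C a : MvPolynomial ℕ k) ^ 2 = -3 := by
      rw [← C_pow, ha]; simp only [map_neg, map_ofNat]
    simp only [map_add, map_mul, map_pow, aeval_X, aeval_C, map_ofNat,
      Matrix.cons_val_zero, Matrix.cons_val_one, Matrix.head_cons, C_sub, C_mul, MvPolynomial.algebraMap_eq, C_1, map_neg]
    linear_combination ((2 * (X 0 ^ 4 + X 1 ^ 4) : MvPolynomial ℕ k)) * ha' +
      ((12 * (C a - 1) * X 0 ^ 2 * X 1 ^ 2 +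
        (6 + 2 * C a) * ((C i) ^ 2 - 1) * X 1 ^ 4 : MvPolynomial ℕ k)) * hi'
  · intro h
    have : a = 3 := by linear_combination (-1/2 : k) * h + (-2 : k) * hi
    exact ha3 this
  · field_simp
    linear_combination (a - 3) * ha
  · intro h
    apply ha3
    field_simp at h
    linear_combination h
  · field_simp
    linear_combination (4 - 4 * a) * hi
end
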